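/- arXiv:2105.10562 — 2 statements merged into one kernel-verified Lean document; each statement's English description precedes it below -/
import Mathlib

section
/- Let Σ be a holomorphic curve in a nearly-Kähler 6-manifold of type λ, let η be a normal field, and (e₁, e₂ = Je₁) an oriented orthonormal tangent frame. Then ‖Wη‖² + Σᵢ R̄(η, eᵢ, eᵢ, η) = -R^⊥(e₁, e₂, η, Jη) + 2λ²‖η‖², where ‖Wη‖² = ‖W_{e₁}η‖² + ‖W_{e₂}η‖². -/
open scoped RealInnerProductSpace

/-- Lemma 4.1 of the paper: Let `Σ` be a holomorphic curve in a
nearly-Kähler 6-manifold of constant type `λ`, `η` a normal vector, and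
`(e₁, e₂ = Je₁)` an oriented orthonormal tangent frame.  Then
`‖Wη‖² + Σᵢ R̄(η,eᵢ,eᵢ,η) = -R⊥(e₁,e₂,η,Jη) + 2λ²‖η‖²`,
where `‖Wη‖² = ‖W_{e₁}η‖² + ‖W_{e₂}η‖²`.

Pointwise model at a point of `Σ`: `V` is the tangent space of `M`, `Tan` the tangent
plane of `Σ`; hypotheses record the constant-type identity, the nearly-Kähler
curvature identity `R̄(X,Y,Y,X) + R̄(X,JY,JY,X) + R̄(X,JX,Y,JY) = 2‖P(X,Y)‖²`, the pair
symmetry of the Riemann tensor, the Ricci equation, and the shape-operator symmetries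
`W_{JX}η = -J W_X η`, `W_X (Jη) = J W_X η`. -/
theorem stmt10 {V : Type*} [NormedAddCommGroup V] [InnerProductSpace ℝ V]
    (J : V →ₗ[ℝ] V) (hJ2 : ∀ v, J (J v) = -v)
    (hJo : ∀ v w, ⟪J v, J w⟫ = ⟪v, w⟫)
    (Tan : Submodule ℝ V)
    (hJTan : ∀ v ∈ Tan, J v ∈ Tan) (hJNor : ∀ v ∈ Tanᗮ, J v ∈ Tanᗮ)
    (lam : ℝ)
    (P : V → V → V)
    (htype : ∀ X Y, ‖P X Y‖ ^ 2
      = lam ^ 2 * (‖X‖ ^ 2 * ‖Y‖ ^ 2 - ⟪X, Y⟫ ^ 2 - ⟪J X, Y⟫ ^ 2))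
    (Rbar Rperp : V → V → V → V → ℝ)
    (hNKcurv : ∀ X Y,
      Rbar X Y Y X + Rbar X (J Y) (J Y) X + Rbar X (J X) Y (J Y) = 2 * ‖P X Y‖ ^ 2)
    (hpair : ∀ X Y Z U, Rbar X Y Z U = Rbar Z U X Y)
    (W : V → V → V)
    (hRicci : ∀ X ∈ Tan, ∀ Y ∈ Tan, ∀ η ∈ Tanᗮ, ∀ ξ ∈ Tanᗮ,
      Rbar X Y η ξ = Rperp X Y η ξ + ⟪W X η, W Y ξ⟫ - ⟪W X ξ, W Y η⟫)
    (hW1 : ∀ X η, W (J X) η = - J (W X η))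
    (hW2 : ∀ X η, W X (J η) = J (W X η))
    (e₁ : V) (he₁ : e₁ ∈ Tan) (hunit : ‖e₁‖ = 1)
    (e₂ : V) (he₂ : e₂ = J e₁)
    (η : V) (hη : η ∈ Tanᗮ) :
    (‖W e₁ η‖ ^ 2 + ‖W e₂ η‖ ^ 2) + (Rbar η e₁ e₁ η + Rbar η e₂ e₂ η)
      = - Rperp e₁ e₂ η (J η) + 2 * lam ^ 2 * ‖η‖ ^ 2 := by
  subst he₂
  have hJη := hJNor η hη
  have h1 : ⟪η, e₁⟫ = 0 := by
    rw [real_inner_comm]; exact (Submodule.mem_orthogonal _ _).mp hη e₁ he₁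
  have h2 : ⟪J η, e₁⟫ = 0 := by
    rw [real_inner_comm]; exact (Submodule.mem_orthogonal _ _).mp hJη e₁ he₁
  have hnorm : ∀ v : V, ‖J v‖ ^ 2 = ‖v‖ ^ 2 := by
    intro v
    rw [← real_inner_self_eq_norm_sq, ← real_inner_self_eq_norm_sq, hJo]
  have hP : ‖P η e₁‖ ^ 2 = lam ^ 2 * ‖η‖ ^ 2 := by
    rw [htype, hunit, h1, h2]; ring
  have hc := hNKcurv η e₁
  rw [hP] at hc
  have hR := hRicci e₁ he₁ (J e₁) (hJTan e₁ he₁) η hη (J η) hJη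
  have hWa : W (J e₁) (J η) = W e₁ η := by
    rw [hW2, hW1, map_neg, hJ2, neg_neg]
  have hWb : W e₁ (J η) = J (W e₁ η) := hW2 e₁ η
  have hWc : W (J e₁) η = - J (W e₁ η) := hW1 e₁ η
  rw [hWa, hWb, hWc, inner_neg_right, hJo, real_inner_self_eq_norm_sq] at hR
  have hn2 : ‖W (J e₁) η‖ ^ 2 = ‖W e₁ η‖ ^ 2 := by
    rw [hWc, norm_neg, hnorm]
  have hp : Rbar η (J η) e₁ (J e₁) = Rbar e₁ (J e₁) η (J η) := hpair _ _ _ _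
  rw [hn2]
  rw [hp, hR] at hc
  linarith
end

section
/- Let u: Σ → M be a holomorphic curve in an almost-Hermitian manifold with boundary on a Lagrangian submanifold L, η a normal field tangent to L along ∂Σ, T the unit tangent along ∂Σ, and ν = -JT the outer conormal. If M is nearly-Kähler, then along ∂Σ: ⟨∇_η η, ν⟩ + ⟨∇^⊥_T η, Jη⟩ = 0. -/
/-- Lemma 4.3 of the paper: Let `u : Σ → M` be a holomorphic curve in a
nearly-Kähler manifold with boundary on a Lagrangian submanifold `L`, `η` a normal
field tangent to `L` along `∂Σ`, `T` the unit tangent along `∂Σ`, and `ν = -JT` the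
outer conormal.  Then along `∂Σ`: `⟨∇_η η, ν⟩ + ⟨∇⊥_T η, Jη⟩ = 0`.

Here `Γ` is the space of (restrictions of) vector fields, `F` the functions along
`∂Σ`, `g` the metric (symmetric, with `J` skew-adjoint), `D` the Levi-Civita
connection with metric compatibility expressed via the derivation `Dact`, and `πN`
the projection onto the normal bundle `NΣ`.  The hypotheses record:
`[T,η] = ∇_T η - ∇_η T` is tangent to `L` while `Jη` is normal to `L` (`hbracket`);
metric compatibility in the direction `η` (`hcompat`); `⟨T, Jη⟩ ≡ 0` along `∂Σ`, so
its `η`-derivative vanishes (`hconst`); the nearly-Kähler identity `(∇_η J)(η) = 0`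
(`hNK`); `Jη` is normal to `Σ`, so the tangential part of `∇_T η` pairs trivially
with it (`htanperp`); and `JT = -ν` from holomorphicity (`hν`). -/
theorem stmt13 {Γ F : Type*} [AddCommGroup Γ] [Module ℝ Γ]
    [AddCommGroup F] [Module ℝ F]
    (g : Γ →ₗ[ℝ] Γ →ₗ[ℝ] F)
    (hgsym : ∀ X Y, g X Y = g Y X)
    (J : Γ →ₗ[ℝ] Γ) (hJ2 : ∀ ξ, J (J ξ) = -ξ)
    (hanti : ∀ X Y, g (J X) Y = - g X (J Y))
    (D : Γ → Γ →ₗ[ℝ] Γ)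
    (Dact : Γ → F →+ F)
    (πN : Γ →ₗ[ℝ] Γ)
    (T η ν : Γ)
    (hbracket : g (D T η - D η T) (J η) = 0)
    (hcompat : Dact η (g T (J η)) = g (D η T) (J η) + g T (D η (J η)))
    (hconst : Dact η (g T (J η)) = 0)
    (hNK : D η (J η) = J (D η η))
    (htanperp : g (D T η - πN (D T η)) (J η) = 0)
    (hν : J T = - ν) :
    g (D η η) ν + g (πN (D T η)) (J η) = 0 := by
  have h1 : g (D η T) (J η) + g T (J (D η η)) = 0 := by
    rw [← hNK, ← hcompat, hconst]
  have h2 : g T (J (D η η)) = g (D η η) ν := by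
    have ha := hanti T (D η η)
    rw [hν] at ha
    have : g T (J (D η η)) = - g (J T) (D η η) := by rw [hanti]; abel
    rw [hν] at this
    simp only [map_neg, LinearMap.neg_apply, neg_neg] at this
    rw [this, hgsym]
  have h4 : g (D T η) (J η) = g (D η T) (J η) := by
    have h := hbracket
    simp only [map_sub, LinearMap.sub_apply] at h
    exact sub_eq_zero.mp h
  have h5 : g (πN (D T η)) (J η) = g (D T η) (J η) := by
    have h := htanperp
    simp only [map_sub, LinearMap.sub_apply] at h
    exact (sub_eq_zero.mp h).symm
  rw [h5, h4, ← h2]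
  rw [add_comm]
  exact h1
end
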